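/- arXiv:2211.05029 — 2 statements merged into one kernel-verified Lean document; each statement's English description precedes it below -/
import Mathlib

section
/- Let H be a Hilbert space, V : H → H a bounded self-adjoint operator, T : H → H a bounded invertible operator, and E ∈ ℝ. Define the transfer operator T^E on H ⊕ H by the block matrix ((E·1 - V)T⁻¹, -T*; T⁻¹, 0), and let I be the block operator (0, -1; 1, 0) on H ⊕ H. Then (T^E)* I T^E = I, i.e. the transfer operator is I-unitary. -/
open ContinuousLinearMap

variable {H : Type*}

/-- The block operator `(A B; C D)` on the Hilbert space `H ⊕₂ H`. -/
noncomputable def blockOp [NormedAddCommGroup H] [InnerProductSpace ℂ H]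
    (A B C D : H →L[ℂ] H) : WithLp 2 (H × H) →L[ℂ] WithLp 2 (H × H) :=
  ((WithLp.prodContinuousLinearEquiv 2 ℂ H H).symm : (H × H) →L[ℂ] WithLp 2 (H × H)) ∘L
    (((A ∘L fst ℂ H H + B ∘L snd ℂ H H).prod (C ∘L fst ℂ H H + D ∘L snd ℂ H H)) ∘L
      ((WithLp.prodContinuousLinearEquiv 2 ℂ H H) : WithLp 2 (H × H) →L[ℂ] (H × H)))


section Aux
variable [NormedAddCommGroup H] [InnerProductSpace ℂ H]

lemma blockOp_comp (A B C D A' B' C' D' : H →L[ℂ] H) :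
    blockOp A B C D ∘L blockOp A' B' C' D' =
      blockOp (A ∘L A' + B ∘L C') (A ∘L B' + B ∘L D')
              (C ∘L A' + D ∘L C') (C ∘L B' + D ∘L D') := by
  ext x <;> simp [blockOp] <;> constructor <;> abel

lemma blockOp_adjoint [CompleteSpace H] (A B C D : H →L[ℂ] H) :
    ContinuousLinearMap.adjoint (blockOp A B C D) =
      blockOp (ContinuousLinearMap.adjoint A) (ContinuousLinearMap.adjoint C)
              (ContinuousLinearMap.adjoint B) (ContinuousLinearMap.adjoint D) := by
  symm
  rw [eq_adjoint_iff]
  intro x y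
  simp [blockOp, WithLp.prod_inner_apply, inner_add_left, inner_add_right,
    adjoint_inner_left, adjoint_inner_right]
  ring

end Aux

/-- for a bounded self-adjoint `V`, an invertible bounded `T` (with two-sided
inverse `S`) and real energy `E`, the transfer operator
`𝒯 = ((E·1 - V)T⁻¹, -T*; T⁻¹, 0)` satisfies `𝒯* ℐ 𝒯 = ℐ` with `ℐ = (0,-1;1,0)`. -/
theorem transfer_operator_I_unitary
    [NormedAddCommGroup H] [InnerProductSpace ℂ H] [CompleteSpace H]
    (V T S : H →L[ℂ] H) (hV : IsSelfAdjoint V)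
    (hTS : T ∘L S = 1) (hST : S ∘L T = 1) (E : ℝ) :
    ContinuousLinearMap.adjoint
        (blockOp (((E : ℂ) • (1 : H →L[ℂ] H) - V) ∘L S) (-(ContinuousLinearMap.adjoint T)) S 0)
      ∘L (blockOp (0 : H →L[ℂ] H) (-1) 1 0
      ∘L blockOp (((E : ℂ) • (1 : H →L[ℂ] H) - V) ∘L S) (-(ContinuousLinearMap.adjoint T)) S 0)
    = blockOp (0 : H →L[ℂ] H) (-1) 1 0 := by
  have hW : ContinuousLinearMap.adjoint ((E : ℂ) • (1 : H →L[ℂ] H) - V)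
      = (E : ℂ) • (1 : H →L[ℂ] H) - V := by
    rw [← ContinuousLinearMap.star_eq_adjoint, star_sub, hV.star_eq, star_smul, star_one]
    simp
  have h2 : ContinuousLinearMap.adjoint S ∘L ContinuousLinearMap.adjoint T = 1 := by
    rw [← adjoint_comp, hTS, ← ContinuousLinearMap.star_eq_adjoint]
    exact star_one _
  have h3 : ContinuousLinearMap.adjoint (-(ContinuousLinearMap.adjoint T)) = -T := by
    simp [← ContinuousLinearMap.star_eq_adjoint]
  rw [blockOp_adjoint, blockOp_comp, blockOp_comp]
  congr 1
  · rw [adjoint_comp, hW]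
    simp [comp_assoc, ContinuousLinearMap.one_def]
  · simp [comp_neg, h2, ContinuousLinearMap.one_def]
  · simp [h3, neg_comp, hTS, ContinuousLinearMap.one_def]
  · simp
end

section
/- Let V be a self-adjoint n×n matrix and E ∈ ℝ with E·1 - V invertible, let Ĥ = ℂ^L, and let π⁻, π⁺ be coisometries ℂ^n → ℂ^L with orthogonal ranges such that G^{-,+} = π⁻(E·1-V)⁻¹(π⁺)* is invertible. Let T̂ be an invertible L×L matrix. Then the reduced transfer matrix T̂^E = A · B, with A = ((G⁻⁺)⁻¹, -(G⁻⁺)⁻¹G⁻⁻; G⁺⁺(G⁻⁺)⁻¹, G⁺⁻ - G⁺⁺(G⁻⁺)⁻¹G⁻⁻) and B = (T̂⁻¹, 0; 0, T̂*), satisfies (T̂^E)* I ∂_E T̂^E ≥ 0. -/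
/-!
Write `𝒢 = (G⁻⁺, G⁻⁻; G⁺⁺, G⁺⁻) = Π⁻ (E - V)⁻¹ (Π⁺)*` with `Π⁻ = (π⁻; π⁺)` and `Π⁺ = (π⁺; π⁻)`.
Then `𝒜 = 𝒴 𝒳⁻¹` for `𝒳 = (G⁻⁺, G⁻⁻; 0, 1)` and `𝒴 = (1, 0; G⁺⁺, G⁺⁻)`, which are affine
in `𝒢`, so `∂𝒜 = (P₂ - 𝒜 P₁) ∂𝒢 𝒳⁻¹` with `P₁ = diag(1, 0)`, `P₂ = diag(0, 1)`.
Since `(G^{x,y})* = G^{y,x}`, a Wronskian-type identity gives `𝒴* ℐ (P₂ - 𝒜 P₁) = -S` for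
the block swap `S`, while `∂𝒢 = -Π⁻ (E - V)⁻² (Π⁺)*` and `S Π⁻ = Π⁺` make `-S ∂𝒢 = W* W`
with `W = (E - V)⁻¹ (Π⁺)*`. Hence `𝒜* ℐ ∂𝒜 = (W 𝒳⁻¹)* (W 𝒳⁻¹) ≥ 0`, and the constant
factor `ℬ` only conjugates this.
-/

open Matrix
open scoped ComplexOrder

attribute [local instance] Matrix.frobeniusNormedAddCommGroup Matrix.frobeniusNormedSpace

/-- The matrix `ℐ = (0,-1;1,0)` in `L×L` blocks. -/
def Iop (L : ℕ) : Matrix (Fin L ⊕ Fin L) (Fin L ⊕ Fin L) ℂ :=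
  Matrix.fromBlocks 0 (-1) 1 0

variable {n L : ℕ}

/-- `G^{x,y}(e) = π^x (e·1 - V)⁻¹ (π^y)*`. -/
noncomputable def Gblk (V : Matrix (Fin n) (Fin n) ℂ)
    (π₁ π₂ : Matrix (Fin L) (Fin n) ℂ) (e : ℝ) : Matrix (Fin L) (Fin L) ℂ :=
  π₁ * ((e : ℂ) • (1 : Matrix (Fin n) (Fin n) ℂ) - V)⁻¹ * π₂ᴴ

/-- The matrix `𝒜^e = ((G⁻⁺)⁻¹, -(G⁻⁺)⁻¹G⁻⁻; G⁺⁺(G⁻⁺)⁻¹, G⁺⁻ - G⁺⁺(G⁻⁺)⁻¹G⁻⁻)`. -/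
noncomputable def redA (V : Matrix (Fin n) (Fin n) ℂ)
    (πm πp : Matrix (Fin L) (Fin n) ℂ) (e : ℝ) :
    Matrix (Fin L ⊕ Fin L) (Fin L ⊕ Fin L) ℂ :=
  Matrix.fromBlocks (Gblk V πm πp e)⁻¹ (-((Gblk V πm πp e)⁻¹ * Gblk V πm πm e))
    (Gblk V πp πp e * (Gblk V πm πp e)⁻¹)
    (Gblk V πp πm e - Gblk V πp πp e * (Gblk V πm πp e)⁻¹ * Gblk V πm πm e)

/-- The reduced transfer matrix `𝒯̂^e = 𝒜^e · (That⁻¹, 0; 0, That*)`. -/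
noncomputable def redT (V : Matrix (Fin n) (Fin n) ℂ)
    (πm πp : Matrix (Fin L) (Fin n) ℂ) (That : Matrix (Fin L) (Fin L) ℂ) (e : ℝ) :
    Matrix (Fin L ⊕ Fin L) (Fin L ⊕ Fin L) ℂ :=
  redA V πm πp e * Matrix.fromBlocks That⁻¹ 0 0 Thatᴴ

attribute [local instance] Matrix.frobeniusNormedRing Matrix.frobeniusNormedAlgebra

section Calculus

variable {ι κ μ ν : Type*} [Fintype ι] [Fintype κ] [Fintype μ] [Fintype ν] {x : ℝ}

theorem HasDerivAt.matrix_const_mul_mul_const {f : ℝ → Matrix κ μ ℂ} {f' : Matrix κ μ ℂ}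
    (hf : HasDerivAt f f' x) (P : Matrix ι κ ℂ) (Q : Matrix μ ν ℂ) :
    HasDerivAt (fun e => P * f e * Q) (P * f' * Q) x :=
  (LinearMap.toContinuousLinearMap
    ((mulRightLinearMap ι ℝ Q).comp (mulLeftLinearMap μ ℝ P))).hasFDerivAt.comp_hasDerivAt x hf

theorem HasDerivAt.matrix_inv [DecidableEq ι] {f : ℝ → Matrix ι ι ℂ} {f' : Matrix ι ι ℂ}
    (hf : HasDerivAt f f' x) (hx : IsUnit (f x)) :
    HasDerivAt (fun e => (f e)⁻¹) (-((f x)⁻¹ * f' * (f x)⁻¹)) x := by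
  have h := (hasFDerivAt_ringInverse (𝕜 := ℝ) hx.unit).comp_hasDerivAt x hf
  simp only [Function.comp_def, IsUnit.unit_spec, coe_units_inv, ← nonsing_inv_eq_ringInverse] at h
  exact h.congr_deriv (by simp [mul_assoc])

theorem hasDerivAt_resolvent [DecidableEq ι] (V : Matrix ι ι ℂ) {E : ℝ}
    (hE : IsUnit ((E : ℂ) • (1 : Matrix ι ι ℂ) - V)) :
    HasDerivAt (fun e : ℝ => ((e : ℂ) • (1 : Matrix ι ι ℂ) - V)⁻¹)
      (-(((E : ℂ) • (1 : Matrix ι ι ℂ) - V)⁻¹ * ((E : ℂ) • (1 : Matrix ι ι ℂ) - V)⁻¹)) E := by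
  have h : HasDerivAt (fun e : ℝ => (e : ℂ) • (1 : Matrix ι ι ℂ) - V) 1 E := by
    simp only [Complex.coe_smul]
    exact (((hasDerivAt_id E).smul_const (1 : Matrix ι ι ℂ)).sub_const V).congr_deriv
      (one_smul _ _)
  simpa using h.matrix_inv hE

end Calculus

theorem isHermitian_resolvent {ι : Type*} [Fintype ι] [DecidableEq ι] {V : Matrix ι ι ℂ}
    (hV : V.IsHermitian) (e : ℝ) : (((e : ℂ) • (1 : Matrix ι ι ℂ) - V)⁻¹).IsHermitian := by
  refine IsHermitian.inv (IsHermitian.sub ?_ hV)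
  simp [IsHermitian, conjTranspose_smul]

section Green

variable (V : Matrix (Fin n) (Fin n) ℂ) (πm πp : Matrix (Fin L) (Fin n) ℂ)

theorem conjTranspose_Gblk (hV : V.IsHermitian) (π₁ π₂ : Matrix (Fin L) (Fin n) ℂ) (e : ℝ) :
    (Gblk V π₁ π₂ e)ᴴ = Gblk V π₂ π₁ e := by
  simp only [Gblk, conjTranspose_mul, conjTranspose_conjTranspose, (isHermitian_resolvent hV e).eq,
    Matrix.mul_assoc]

noncomputable def green (e : ℝ) : Matrix (Fin L ⊕ Fin L) (Fin L ⊕ Fin L) ℂ :=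
  fromBlocks (Gblk V πm πp e) (Gblk V πm πm e) (Gblk V πp πp e) (Gblk V πp πm e)

theorem green_eq_fromRows_mul_mul (e : ℝ) :
    green V πm πp e =
      fromRows πm πp * ((e : ℂ) • (1 : Matrix (Fin n) (Fin n) ℂ) - V)⁻¹ * (fromRows πp πm)ᴴ := by
  rw [conjTranspose_fromRows_eq_fromCols_conjTranspose, fromRows_mul, fromRows_mul_fromCols]
  rfl

theorem hasDerivAt_green {E : ℝ} (hE : IsUnit ((E : ℂ) • (1 : Matrix (Fin n) (Fin n) ℂ) - V)) :
    HasDerivAt (green V πm πp)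
      (-(fromRows πm πp * ((E : ℂ) • (1 : Matrix (Fin n) (Fin n) ℂ) - V)⁻¹ *
        ((E : ℂ) • (1 : Matrix (Fin n) (Fin n) ℂ) - V)⁻¹ * (fromRows πp πm)ᴴ)) E := by
  have h := (hasDerivAt_resolvent V hE).matrix_const_mul_mul_const
    (fromRows πm πp) (fromRows πp πm)ᴴ
  rw [show green V πm πp = _ from funext (green_eq_fromRows_mul_mul V πm πp)]
  exact h.congr_deriv (by simp only [Matrix.mul_neg, Matrix.neg_mul, Matrix.mul_assoc])

def projUpper (L : ℕ) : Matrix (Fin L ⊕ Fin L) (Fin L ⊕ Fin L) ℂ := fromBlocks 1 0 0 0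

def projLower (L : ℕ) : Matrix (Fin L ⊕ Fin L) (Fin L ⊕ Fin L) ℂ := fromBlocks 0 0 0 1

def swapBlocks (L : ℕ) : Matrix (Fin L ⊕ Fin L) (Fin L ⊕ Fin L) ℂ := fromBlocks 0 1 1 0

theorem swapBlocks_mul_fromRows {ι : Type*} (A₁ A₂ : Matrix (Fin L) ι ℂ) :
    swapBlocks L * fromRows A₁ A₂ = fromRows A₂ A₁ := by
  simp [swapBlocks, fromBlocks_mul_fromRows]

noncomputable def redX (e : ℝ) : Matrix (Fin L ⊕ Fin L) (Fin L ⊕ Fin L) ℂ :=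
  fromBlocks (Gblk V πm πp e) (Gblk V πm πm e) 0 1

noncomputable def redY (e : ℝ) : Matrix (Fin L ⊕ Fin L) (Fin L ⊕ Fin L) ℂ :=
  fromBlocks 1 0 (Gblk V πp πp e) (Gblk V πp πm e)

theorem redX_eq_projUpper_mul_green_add :
    redX V πm πp = fun e => projUpper L * green V πm πp e + projLower L := by
  funext e
  simp [redX, projUpper, projLower, green, fromBlocks_multiply, fromBlocks_add]

theorem redY_eq_projLower_mul_green_add :
    redY V πm πp = fun e => projLower L * green V πm πp e + projUpper L := by
  funext e
  simp [redY, projUpper, projLower, green, fromBlocks_multiply, fromBlocks_add]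

theorem isUnit_redX_iff (e : ℝ) : IsUnit (redX V πm πp e) ↔ IsUnit (Gblk V πm πp e) := by
  simp [redX]

theorem redA_eq_redY_mul_inv_redX {e : ℝ} (hG : IsUnit (Gblk V πm πp e)) :
    redA V πm πp e = redY V πm πp e * (redX V πm πp e)⁻¹ := by
  rw [redX, redY, inv_fromBlocks_zero₂₁_of_isUnit_iff _ _ _ (iff_of_true hG isUnit_one),
    fromBlocks_multiply]
  simp [redA, mul_assoc, sub_eq_add_neg, add_comm]

end Green

section Transfer

variable {V : Matrix (Fin n) (Fin n) ℂ} {πm πp : Matrix (Fin L) (Fin n) ℂ}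

theorem conjTranspose_redY_mul_Iop_mul (hV : V.IsHermitian) {e : ℝ}
    (hG : IsUnit (Gblk V πm πp e)) :
    (redY V πm πp e)ᴴ * Iop L * (projLower L - redA V πm πp e * projUpper L) =
      -swapBlocks L := by
  have hinv : Gblk V πm πp e * (Gblk V πm πp e)⁻¹ = 1 :=
    mul_nonsing_inv _ ((isUnit_iff_isUnit_det _).mp hG)
  simp [redY, redA, Iop, projUpper, projLower, swapBlocks, fromBlocks_conjTranspose,
    fromBlocks_multiply, sub_eq_add_neg, fromBlocks_neg, fromBlocks_add, conjTranspose_Gblk V hV,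
    hinv]

theorem hasDerivAt_redA {E : ℝ} {G' : Matrix (Fin L ⊕ Fin L) (Fin L ⊕ Fin L) ℂ}
    (hgreen : HasDerivAt (green V πm πp) G' E) (hG : IsUnit (Gblk V πm πp E)) :
    HasDerivAt (redA V πm πp)
      ((projLower L - redA V πm πp E * projUpper L) * G' * (redX V πm πp E)⁻¹) E := by
  have hX : HasDerivAt (redX V πm πp) (projUpper L * G') E := by
    rw [redX_eq_projUpper_mul_green_add]
    exact (hgreen.const_mul _).add_const _
  have hY : HasDerivAt (redY V πm πp) (projLower L * G') E := by
    rw [redY_eq_projLower_mul_green_add]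
    exact (hgreen.const_mul _).add_const _
  have hXE : IsUnit (redX V πm πp E) := (isUnit_redX_iff V πm πp E).mpr hG
  -- `redA = redY * redX⁻¹` holds only where `G⁻⁺` is invertible, which is an open condition.
  have hnear : redA V πm πp =ᶠ[nhds E] fun e => redY V πm πp e * (redX V πm πp e)⁻¹ := by
    filter_upwards [hX.continuousAt.eventually_mem (Units.isOpen.mem_nhds hXE)] with e he
    exact redA_eq_redY_mul_inv_redX V πm πp ((isUnit_redX_iff V πm πp e).mp he)
  refine ((hY.mul (hX.matrix_inv hXE)).congr_of_eventuallyEq hnear).congr_deriv ?_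
  rw [redA_eq_redY_mul_inv_redX V πm πp hG]
  noncomm_ring

theorem conjTranspose_redA_mul_Iop_mul (hV : V.IsHermitian) {e : ℝ}
    (hG : IsUnit (Gblk V πm πp e)) (M : Matrix (Fin L ⊕ Fin L) (Fin L ⊕ Fin L) ℂ) :
    (redA V πm πp e)ᴴ * Iop L *
        ((projLower L - redA V πm πp e * projUpper L) * M * (redX V πm πp e)⁻¹) =
      -(((redX V πm πp e)⁻¹)ᴴ * swapBlocks L * M * (redX V πm πp e)⁻¹) := by
  calc (redA V πm πp e)ᴴ * Iop L *
        ((projLower L - redA V πm πp e * projUpper L) * M * (redX V πm πp e)⁻¹)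
      = ((redX V πm πp e)⁻¹)ᴴ * ((redY V πm πp e)ᴴ * Iop L *
          (projLower L - redA V πm πp e * projUpper L)) * M * (redX V πm πp e)⁻¹ := by
        nth_rw 1 [redA_eq_redY_mul_inv_redX V πm πp hG]
        simp only [conjTranspose_mul, Matrix.mul_assoc]
    _ = _ := by
        rw [conjTranspose_redY_mul_Iop_mul hV hG]
        simp only [Matrix.mul_neg, Matrix.neg_mul]

theorem exists_hasDerivAt_redA_posSemidef (hV : V.IsHermitian) {E : ℝ}
    (hE : IsUnit ((E : ℂ) • (1 : Matrix (Fin n) (Fin n) ℂ) - V)) (hG : IsUnit (Gblk V πm πp E)) :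
    ∃ A', HasDerivAt (redA V πm πp) A' E ∧ ((redA V πm πp E)ᴴ * Iop L * A').PosSemidef := by
  refine ⟨_, hasDerivAt_redA (hasDerivAt_green V πm πp hE) hG, ?_⟩
  set R := ((E : ℂ) • (1 : Matrix (Fin n) (Fin n) ℂ) - V)⁻¹
  set K := (redX V πm πp E)⁻¹
  have hR : Rᴴ = R := isHermitian_resolvent hV E
  have hgram : (redA V πm πp E)ᴴ * Iop L *
      ((projLower L - redA V πm πp E * projUpper L) *
        -(fromRows πm πp * R * R * (fromRows πp πm)ᴴ) * K) =
      (R * (fromRows πp πm)ᴴ * K)ᴴ * (R * (fromRows πp πm)ᴴ * K) := by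
    rw [conjTranspose_redA_mul_Iop_mul hV hG]
    simp only [Matrix.mul_neg, Matrix.neg_mul, neg_neg, conjTranspose_mul,
      conjTranspose_conjTranspose, hR, ← Matrix.mul_assoc]
    rw [Matrix.mul_assoc Kᴴ, swapBlocks_mul_fromRows]
  rw [hgram]
  exact posSemidef_conjTranspose_mul_self _

end Transfer

theorem reduced_transfer_monotone_general
    (V : Matrix (Fin n) (Fin n) ℂ) (hV : V.IsHermitian) (E : ℝ)
    (hE : IsUnit ((E : ℂ) • (1 : Matrix (Fin n) (Fin n) ℂ) - V))
    (πm πp : Matrix (Fin L) (Fin n) ℂ)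
    (hG : IsUnit (Gblk V πm πp E))
    (That : Matrix (Fin L) (Fin L) ℂ)
    (D : Matrix (Fin L ⊕ Fin L) (Fin L ⊕ Fin L) ℂ)
    (hD : HasDerivAt (redT V πm πp That) D E) :
    Matrix.PosSemidef ((redT V πm πp That E)ᴴ * Iop L * D) := by
  obtain ⟨A', hA', hpos⟩ := exists_hasDerivAt_redA_posSemidef hV hE hG
  set B := fromBlocks That⁻¹ 0 0 Thatᴴ
  have hT : HasDerivAt (redT V πm πp That) (A' * B) E := hA'.mul_const B
  rw [hD.unique hT, redT, conjTranspose_mul]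
  simpa only [Matrix.mul_assoc] using hpos.conjTranspose_mul_mul_same B

/-- for self-adjoint `V`, coisometries `π⁻, π⁺` with orthogonal ranges of
their adjoints, real `E` with `E·1 - V` invertible and `G⁻⁺` invertible, and an invertible
`That`, the reduced transfer matrix `𝒯̂^E = 𝒜 · ℬ` satisfies `(𝒯̂^E)* ℐ ∂_E 𝒯̂^E ≥ 0`. -/
theorem reduced_transfer_monotone
    (V : Matrix (Fin n) (Fin n) ℂ) (hV : V.IsHermitian) (E : ℝ)
    (hE : IsUnit ((E : ℂ) • (1 : Matrix (Fin n) (Fin n) ℂ) - V))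
    (πm πp : Matrix (Fin L) (Fin n) ℂ)
    (hπm : πm * πmᴴ = 1) (hπp : πp * πpᴴ = 1) (horth : πp * πmᴴ = 0)
    (hG : IsUnit (Gblk V πm πp E))
    (That : Matrix (Fin L) (Fin L) ℂ) (hThat : IsUnit That)
    (D : Matrix (Fin L ⊕ Fin L) (Fin L ⊕ Fin L) ℂ)
    (hD : HasDerivAt (redT V πm πp That) D E) :
    Matrix.PosSemidef ((redT V πm πp That E)ᴴ * Iop L * D) :=
  reduced_transfer_monotone_general V hV E hE πm πp hG That D hD
end
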